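/- For every q > 0 and all u, v ∈ ℝ^N one has (1/(q+1)) |v|^{q+1} ≤ 2 𝔟[u,v] + 2^{2+1/q} (q/(q+1)) |u|^{q+1}. -/

import Mathlib

open Real RealInnerProductSpace

/-- The power `⟦w⟧^α := |w|^{α−1} w` (with `⟦0⟧^α = 0`). -/
noncomputable def vpow {N : ℕ} (α : ℝ) (w : EuclideanSpace ℝ (Fin N)) :
    EuclideanSpace ℝ (Fin N) :=
  ‖w‖ ^ (α - 1) • w

/-- The boundary term `𝔟[u,v] := (1/(q+1))|v|^{q+1} − (1/(q+1))|u|^{q+1} − ⟦u⟧^q · (v − u)`. -/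
noncomputable def bdry {N : ℕ} (q : ℝ) (u v : EuclideanSpace ℝ (Fin N)) : ℝ :=
  (1 / (q + 1)) * ‖v‖ ^ (q + 1) - (1 / (q + 1)) * ‖u‖ ^ (q + 1) - ⟪vpow q u, v - u⟫

/-!
Cauchy–Schwarz and `⟦u⟧^q · u = |u|^{q+1}` give `⟦u⟧^q · (v − u) ≤ |u|^q |v| − |u|^{q+1}`.
Young's inequality with exponents `q+1` and `(q+1)/q` absorbs the cross term `2|u|^q |v|` into
`(1/(q+1))|v|^{q+1} + 2^{1+1/q} (q/(q+1)) |u|^{q+1}`, and `2^{1+1/q} ≤ 2^{2+1/q}`.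
-/

section vpow

variable {N : ℕ} {q : ℝ}

lemma norm_vpow (hq : q ≠ 0) (u : EuclideanSpace ℝ (Fin N)) : ‖vpow q u‖ = ‖u‖ ^ q := by
  rcases eq_or_ne u 0 with rfl | hu
  · simp [vpow, zero_rpow hq]
  · rw [vpow, norm_smul_of_nonneg (rpow_nonneg (norm_nonneg u) _),
      rpow_sub_one (norm_ne_zero_iff.mpr hu), div_mul_cancel₀ _ (norm_ne_zero_iff.mpr hu)]

lemma inner_vpow_self (hq : q + 1 ≠ 0) (u : EuclideanSpace ℝ (Fin N)) :
    ⟪vpow q u, u⟫ = ‖u‖ ^ (q + 1) := by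
  rcases eq_or_ne u 0 with rfl | hu
  · simp [vpow, zero_rpow hq]
  · rw [vpow, real_inner_smul_left, real_inner_self_eq_norm_sq, ← rpow_natCast,
      ← rpow_add (norm_pos_iff.mpr hu)]
    congr 1
    push_cast
    ring

lemma inner_vpow_sub_le (hq : 0 < q) (u v : EuclideanSpace ℝ (Fin N)) :
    ⟪vpow q u, v - u⟫ ≤ ‖u‖ ^ q * ‖v‖ - ‖u‖ ^ (q + 1) := by
  rw [inner_sub_right, inner_vpow_self (by linarith), ← norm_vpow hq.ne']
  linarith [real_inner_le_norm (vpow q u) v]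

end vpow

lemma mul_rpow_mul_le_young {a b c q : ℝ} (ha : 0 ≤ a) (hb : 0 ≤ b) (hc : 0 ≤ c)
    (hq : 0 < q) :
    c * a ^ q * b ≤ b ^ (q + 1) / (q + 1) + c ^ ((q + 1) / q) * (q / (q + 1)) * a ^ (q + 1) := by
  have hconj : (q + 1).HolderConjugate ((q + 1) / q) := by
    rw [holderConjugate_iff]
    constructor
    · linarith
    · field_simp
      ring
  have hpow : (c * a ^ q) ^ ((q + 1) / q) = c ^ ((q + 1) / q) * a ^ (q + 1) := by
    rw [mul_rpow hc (rpow_nonneg ha q), ← rpow_mul ha, mul_div_cancel₀ _ hq.ne']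
  have := young_inequality_of_nonneg hb (by positivity : 0 ≤ c * a ^ q) hconj
  rw [hpow, div_div_eq_mul_div, mul_div_assoc] at this
  linarith

/-- For every `q > 0` and all `u, v ∈ ℝ^N`,
`(1/(q+1)) |v|^{q+1} ≤ 2 𝔟[u,v] + 2^{2+1/q} (q/(q+1)) |u|^{q+1}`. -/
theorem bdry_lower_bound (N : ℕ) (q : ℝ) (hq : 0 < q)
    (u v : EuclideanSpace ℝ (Fin N)) :
    (1 / (q + 1)) * ‖v‖ ^ (q + 1) ≤
      2 * bdry q u v + (2 : ℝ) ^ (2 + 1 / q) * (q / (q + 1)) * ‖u‖ ^ (q + 1) := by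
  have hinner := inner_vpow_sub_le hq u v
  have hyoung := mul_rpow_mul_le_young (norm_nonneg u) (norm_nonneg v) zero_le_two hq
  have hexp : (2 : ℝ) ^ ((q + 1) / q) ≤ 2 ^ (2 + 1 / q) := by
    apply rpow_le_rpow_of_exponent_le one_le_two
    rw [add_div, div_self hq.ne']
    linarith
  have hsplit : ‖u‖ ^ (q + 1) - 1 / (q + 1) * ‖u‖ ^ (q + 1) = q / (q + 1) * ‖u‖ ^ (q + 1) := by
    field_simp
    ring
  have hA : 0 ≤ q / (q + 1) * ‖u‖ ^ (q + 1) := by positivity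
  rw [bdry]
  linear_combination 2 * hinner + hyoung + mul_le_mul_of_nonneg_right hexp hA + 2 * hA - 2 * hsplit
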